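/- Let (R, ·, 𝔢) be a symmetric partial A-module algebra over a regular multiplier Hopf algebra A. Then for all a,b ∈ A and x,y ∈ R: (i) (a·x)(b·y) = a₍₁₎·(x(S(a₍₂₎)b·y)); (ii) (a·x)(b·y) = b₍₂₎·((S⁻¹(b₍₁₎)a·x)y). -/

import Mathlib

/- ## Preliminaries: multiplier algebras and (regular) multiplier Hopf algebras -/

open scoped TensorProduct
open TensorProduct LinearMap
set_option linter.unusedSectionVars false

noncomputable section

variable (k : Type*) [Field k]

section MultiplierAlgebra

variable (A : Type*) [NonUnitalRing A] [Module k A] [SMulCommClass k A A] [IsScalarTower k A A]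

/-- The product of an algebra is *nondegenerate*. -/
def NondegProd : Prop :=
  (∀ a : A, (∀ b : A, a * b = 0) → a = 0) ∧ ∀ b : A, (∀ a : A, a * b = 0) → b = 0

/-- A multiplier of `A`: a pair `(U, V)` of linear maps with `U (a*b) = U a * b`,
`V (a*b) = a * V b` and `V a * b = a * U b`. -/
@[ext] structure Multiplier where
  U : A →ₗ[k] A
  V : A →ₗ[k] A
  U_mul : ∀ a b : A, U (a * b) = U a * b
  V_mul : ∀ a b : A, V (a * b) = a * V b
  compat : ∀ a b : A, V a * b = a * U b

namespace Multiplier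

variable {k A}

instance : Zero (Multiplier k A) := ⟨⟨0, 0, by simp, by simp, by simp⟩⟩
instance : Add (Multiplier k A) :=
  ⟨fun m n => ⟨m.U + n.U, m.V + n.V,
    by simp [m.U_mul, n.U_mul, add_mul],
    by simp [m.V_mul, n.V_mul, mul_add],
    by simp [add_mul, mul_add, m.compat, n.compat]⟩⟩
instance : Neg (Multiplier k A) :=
  ⟨fun m => ⟨-m.U, -m.V, by simp [m.U_mul], by simp [m.V_mul],
    by simp [m.compat]⟩⟩
instance : SMul k (Multiplier k A) :=
  ⟨fun c m => ⟨c • m.U, c • m.V,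
    by simp [m.U_mul, smul_mul_assoc],
    by simp [m.V_mul, mul_smul_comm],
    by simp [smul_mul_assoc, mul_smul_comm, m.compat]⟩⟩

@[simp] lemma zero_U : (0 : Multiplier k A).U = 0 := rfl
@[simp] lemma zero_V : (0 : Multiplier k A).V = 0 := rfl
@[simp] lemma add_U (m n : Multiplier k A) : (m + n).U = m.U + n.U := rfl
@[simp] lemma add_V (m n : Multiplier k A) : (m + n).V = m.V + n.V := rfl
@[simp] lemma neg_U (m : Multiplier k A) : (-m).U = -m.U := rfl
@[simp] lemma neg_V (m : Multiplier k A) : (-m).V = -m.V := rfl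
@[simp] lemma smul_U (c : k) (m : Multiplier k A) : (c • m).U = c • m.U := rfl
@[simp] lemma smul_V (c : k) (m : Multiplier k A) : (c • m).V = c • m.V := rfl

instance : AddCommGroup (Multiplier k A) where
  add_assoc a b c := by ext x <;> simp [add_assoc]
  zero_add a := by ext x <;> simp
  add_zero a := by ext x <;> simp
  add_comm a b := by ext x <;> simp [add_comm]
  neg_add_cancel a := by ext x <;> simp
  nsmul := nsmulRec
  zsmul := zsmulRec

instance : Module k (Multiplier k A) where
  one_smul m := by ext x <;> simp
  mul_smul c d m := by ext x <;> simp [mul_smul]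
  smul_zero c := by ext x <;> simp
  smul_add c m n := by ext x <;> simp
  add_smul c d m := by ext x <;> simp [add_smul]
  zero_smul m := by ext x <;> simp

instance : One (Multiplier k A) := ⟨⟨LinearMap.id, LinearMap.id, by simp, by simp, by simp⟩⟩
instance : Mul (Multiplier k A) :=
  ⟨fun m n => ⟨m.U ∘ₗ n.U, n.V ∘ₗ m.V,
    by simp [n.U_mul, m.U_mul],
    by simp [m.V_mul, n.V_mul],
    by intro a b; simp only [LinearMap.comp_apply]; rw [n.compat, m.compat]⟩⟩

@[simp] lemma one_U : (1 : Multiplier k A).U = LinearMap.id := rfl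
@[simp] lemma one_V : (1 : Multiplier k A).V = LinearMap.id := rfl
@[simp] lemma mul_U (m n : Multiplier k A) : (m * n).U = m.U ∘ₗ n.U := rfl
@[simp] lemma mul_V (m n : Multiplier k A) : (m * n).V = n.V ∘ₗ m.V := rfl

instance : Monoid (Multiplier k A) where
  mul_assoc a b c := by ext x <;> simp
  one_mul a := by ext x <;> simp
  mul_one a := by ext x <;> simp

/-- The canonical map `A → M(A)` given by left and right multiplication. -/
def incl (a : A) : Multiplier k A :=
  ⟨LinearMap.mulLeft k a, LinearMap.mulRight k a,
    fun b c => by simp [mul_assoc], fun b c => by simp [mul_assoc],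
    fun b c => by simp [mul_assoc]⟩

@[simp] lemma incl_U (a b : A) : (incl (k := k) a).U b = a * b := rfl
@[simp] lemma incl_V (a b : A) : (incl (k := k) a).V b = b * a := rfl

/-- The canonical map `A → M(A)` as a linear map. -/
def inclL : A →ₗ[k] Multiplier k A where
  toFun := incl
  map_add' a b := by ext x <;> simp [add_mul, mul_add]
  map_smul' c a := by ext x <;> simp [smul_mul_assoc, mul_smul_comm]

@[simp] lemma inclL_apply (a : A) : (inclL (k := k) a) = incl a := rfl

/-- The `U`-component, as a linear map. -/
def Ulm : Multiplier k A →ₗ[k] A →ₗ[k] A where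
  toFun m := m.U
  map_add' _ _ := rfl
  map_smul' _ _ := rfl

/-- The `V`-component, as a linear map. -/
def Vlm : Multiplier k A →ₗ[k] A →ₗ[k] A where
  toFun m := m.V
  map_add' _ _ := rfl
  map_smul' _ _ := rfl

end Multiplier

end MultiplierAlgebra

section Tensor

variable (R : Type*) [NonUnitalRing R] [Module k R] [SMulCommClass k R R] [IsScalarTower k R R]
variable (A : Type*) [NonUnitalRing A] [Module k A] [SMulCommClass k A A] [IsScalarTower k A A]

/-- The multiplier `1 ⊗ a` of `R ⊗ A`. -/
def oneT (a : A) : Multiplier k (R ⊗[k] A) where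
  U := lTensor R (LinearMap.mulLeft k a)
  V := lTensor R (LinearMap.mulRight k a)
  U_mul u v := by
    induction u with
    | zero => simp
    | add u₁ u₂ h₁ h₂ => simp [add_mul, h₁, h₂]
    | tmul x b =>
      induction v with
      | zero => simp
      | add v₁ v₂ h₁ h₂ => simp [mul_add, h₁, h₂]
      | tmul y c => simp [Algebra.TensorProduct.tmul_mul_tmul, mul_assoc]
  V_mul u v := by
    induction u with
    | zero => simp
    | add u₁ u₂ h₁ h₂ => simp [add_mul, h₁, h₂]
    | tmul x b =>
      induction v with
      | zero => simp
      | add v₁ v₂ h₁ h₂ => simp [mul_add, h₁, h₂]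
      | tmul y c => simp [Algebra.TensorProduct.tmul_mul_tmul, mul_assoc]
  compat u v := by
    induction u with
    | zero => simp
    | add u₁ u₂ h₁ h₂ => simp [add_mul, h₁, h₂]
    | tmul x b =>
      induction v with
      | zero => simp
      | add v₁ v₂ h₁ h₂ => simp only [map_add, mul_add, h₁, h₂]
      | tmul y c => simp [Algebra.TensorProduct.tmul_mul_tmul, mul_assoc]

/-- The multiplier `x ⊗ 1` of `R ⊗ A`. -/
def tOne (x : R) : Multiplier k (R ⊗[k] A) where
  U := rTensor A (LinearMap.mulLeft k x)
  V := rTensor A (LinearMap.mulRight k x)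
  U_mul u v := by
    induction u with
    | zero => simp
    | add u₁ u₂ h₁ h₂ => simp [add_mul, h₁, h₂]
    | tmul y b =>
      induction v with
      | zero => simp
      | add v₁ v₂ h₁ h₂ => simp [mul_add, h₁, h₂]
      | tmul z c => simp [Algebra.TensorProduct.tmul_mul_tmul, mul_assoc]
  V_mul u v := by
    induction u with
    | zero => simp
    | add u₁ u₂ h₁ h₂ => simp [add_mul, h₁, h₂]
    | tmul y b =>
      induction v with
      | zero => simp
      | add v₁ v₂ h₁ h₂ => simp [mul_add, h₁, h₂]
      | tmul z c => simp [Algebra.TensorProduct.tmul_mul_tmul, mul_assoc]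
  compat u v := by
    induction u with
    | zero => simp
    | add u₁ u₂ h₁ h₂ => simp [add_mul, h₁, h₂]
    | tmul y b =>
      induction v with
      | zero => simp
      | add v₁ v₂ h₁ h₂ => simp only [map_add, mul_add, h₁, h₂]
      | tmul z c => simp [Algebra.TensorProduct.tmul_mul_tmul, mul_assoc]

/-- The multiplier `m ⊗ a` of `R ⊗ A`, for `m ∈ M(R)`, `a ∈ A`. -/
def mtensor (m : Multiplier k R) (a : A) : Multiplier k (R ⊗[k] A) where
  U := map m.U (LinearMap.mulLeft k a)
  V := map m.V (LinearMap.mulRight k a)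
  U_mul u v := by
    induction u with
    | zero => simp
    | add u₁ u₂ h₁ h₂ => simp [add_mul, h₁, h₂]
    | tmul y b =>
      induction v with
      | zero => simp
      | add v₁ v₂ h₁ h₂ => simp [mul_add, h₁, h₂]
      | tmul z c => simp [Algebra.TensorProduct.tmul_mul_tmul, mul_assoc, m.U_mul]
  V_mul u v := by
    induction u with
    | zero => simp
    | add u₁ u₂ h₁ h₂ => simp [add_mul, h₁, h₂]
    | tmul y b =>
      induction v with
      | zero => simp
      | add v₁ v₂ h₁ h₂ => simp [mul_add, h₁, h₂]
      | tmul z c => simp [Algebra.TensorProduct.tmul_mul_tmul, mul_assoc, m.V_mul]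
  compat u v := by
    induction u with
    | zero => simp
    | add u₁ u₂ h₁ h₂ => simp [add_mul, h₁, h₂]
    | tmul y b =>
      induction v with
      | zero => simp
      | add v₁ v₂ h₁ h₂ => simp only [map_add, mul_add, h₁, h₂]
      | tmul z c => simp [Algebra.TensorProduct.tmul_mul_tmul, mul_assoc, m.compat]

/-- The multiplier `m ⊗ 1` of `R ⊗ A`, for `m ∈ M(R)`. -/
def mtensorOne (m : Multiplier k R) : Multiplier k (R ⊗[k] A) where
  U := map m.U LinearMap.id
  V := map m.V LinearMap.id
  U_mul u v := by
    induction u with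
    | zero => simp
    | add u₁ u₂ h₁ h₂ => simp [add_mul, h₁, h₂]
    | tmul y b =>
      induction v with
      | zero => simp
      | add v₁ v₂ h₁ h₂ => simp [mul_add, h₁, h₂]
      | tmul z c => simp [Algebra.TensorProduct.tmul_mul_tmul, m.U_mul]
  V_mul u v := by
    induction u with
    | zero => simp
    | add u₁ u₂ h₁ h₂ => simp [add_mul, h₁, h₂]
    | tmul y b =>
      induction v with
      | zero => simp
      | add v₁ v₂ h₁ h₂ => simp [mul_add, h₁, h₂]
      | tmul z c => simp [Algebra.TensorProduct.tmul_mul_tmul, m.V_mul]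
  compat u v := by
    induction u with
    | zero => simp
    | add u₁ u₂ h₁ h₂ => simp [add_mul, h₁, h₂]
    | tmul y b =>
      induction v with
      | zero => simp
      | add v₁ v₂ h₁ h₂ => simp only [map_add, mul_add, h₁, h₂]
      | tmul z c => simp [Algebra.TensorProduct.tmul_mul_tmul, m.compat]

/-- Apply a functional to the second tensor factor:  `x ⊗ a ↦ f a • x`. -/
def apT (f : A →ₗ[k] k) : R ⊗[k] A →ₗ[k] R :=
  (TensorProduct.rid k R).toLinearMap ∘ₗ lTensor R f

@[simp] lemma apT_tmul (f : A →ₗ[k] k) (x : R) (a : A) :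
    apT k R A f (x ⊗ₜ a) = f a • x := rfl

/-- Sum of pure tensors attached to a list of pairs. -/
def psum {M N : Type*} [AddCommGroup M] [Module k M] [AddCommGroup N] [Module k N]
    (l : List (M × N)) : M ⊗[k] N :=
  (l.map fun p => p.1 ⊗ₜ[k] p.2).sum

end Tensor
section MHAdef

variable (A : Type*) [NonUnitalRing A] [Module k A] [SMulCommClass k A A] [IsScalarTower k A A]

/-- Apply a functional to the first tensor factor: `a ⊗ b ↦ f a • b`. -/
def apF (f : A →ₗ[k] k) : A ⊗[k] A →ₗ[k] A :=
  (TensorProduct.lid k A).toLinearMap ∘ₗ rTensor A f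

@[simp] lemma apF_tmul (f : A →ₗ[k] k) (a b : A) : apF k A f (a ⊗ₜ b) = f a • b := rfl

/-- A *regular multiplier Hopf algebra* structure on a nondegenerate algebra `A`:
a comultiplication `Δ : A → M(A ⊗ A)` such that the four Galois-type maps
`T1 : a ⊗ b ↦ Δ(a)(1 ⊗ b)`, `T2 : a ⊗ b ↦ (a ⊗ 1)Δ(b)`, `T3 : a ⊗ b ↦ Δ(a)(b ⊗ 1)`,
`T4 : a ⊗ b ↦ (1 ⊗ b)Δ(a)` are (well-defined and) bijective from `A ⊗ A` onto `A ⊗ A`,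
together with its counit `ε` and (bijective) antipode `S`, subject to the usual axioms
(coassociativity and the counit and antipode laws, in their `T1`/`T2`-covered form). -/
structure MHA where
  nondeg : NondegProd A
  comul : A →ₗ[k] Multiplier k (A ⊗[k] A)
  comul_mul : ∀ a b : A, comul (a * b) = comul a * comul b
  T1 : A ⊗[k] A ≃ₗ[k] A ⊗[k] A
  T2 : A ⊗[k] A ≃ₗ[k] A ⊗[k] A
  T3 : A ⊗[k] A ≃ₗ[k] A ⊗[k] A
  T4 : A ⊗[k] A ≃ₗ[k] A ⊗[k] A
  hT1 : ∀ a b : A, comul a * oneT k A A b = Multiplier.incl (T1 (a ⊗ₜ b))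
  hT2 : ∀ a b : A, tOne k A A a * comul b = Multiplier.incl (T2 (a ⊗ₜ b))
  hT3 : ∀ a b : A, comul a * tOne k A A b = Multiplier.incl (T3 (a ⊗ₜ b))
  hT4 : ∀ a b : A, oneT k A A b * comul a = Multiplier.incl (T4 (a ⊗ₜ b))
  coassoc : ∀ a b c : A,
    (TensorProduct.assoc k A A A)
        ((rTensor A (T2.toLinearMap ∘ₗ TensorProduct.mk k A A a)) (T1 (b ⊗ₜ c)))
      = (lTensor A (T1.toLinearMap ∘ₗ (TensorProduct.mk k A A).flip c)) (T2 (a ⊗ₜ b))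
  counit : A →ₗ[k] k
  counit_mul : ∀ a b : A, counit (a * b) = counit a * counit b
  hcounit1 : ∀ a b : A, apF k A counit (T1 (a ⊗ₜ b)) = a * b
  hcounit2 : ∀ a b : A, apT k A A counit (T2 (a ⊗ₜ b)) = a * b
  S : A ≃ₗ[k] A
  S_antimul : ∀ a b : A, S (a * b) = S b * S a
  hS1 : ∀ a b : A, LinearMap.mul' k A ((rTensor A S.toLinearMap) (T1 (a ⊗ₜ b))) = counit a • b
  hS2 : ∀ a b : A, LinearMap.mul' k A ((lTensor A S.toLinearMap) (T2 (a ⊗ₜ b))) = counit b • a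

end MHAdef

section PComod

variable {k}
variable {A : Type*} [NonUnitalRing A] [Module k A] [SMulCommClass k A A] [IsScalarTower k A A]
variable (H : MHA k A)
variable (R : Type*) [NonUnitalRing R] [Module k R] [SMulCommClass k R R] [IsScalarTower k R R]

/-- `(R, ρ, E)` is a *partial `A`-comodule algebra* (Definition 3.5).  The data
`rmap`/`lmap` records the elements `ρ(x)(1 ⊗ a)` and `(1 ⊗ a)ρ(x)` of `R ⊗ A`.
Condition `c3` is the coassociativity
`(ρ ⊗ ι)(ρ(x)) = (E ⊗ 1)(ι ⊗ Δ)(ρ(x))` in its fully covered form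
`x⁽⁰⁾⁽⁰⁾ ⊗ x⁽⁰⁾⁽¹⁾a ⊗ x⁽¹⁾b = Σᵢ E(x⁽⁰⁾ ⊗ (x⁽¹⁾aᵢ)₍₁₎) ⊗ (x⁽¹⁾aᵢ)₍₂₎bᵢ`
for any representation `Σᵢ aᵢ ⊗ bᵢ = T1⁻¹(a ⊗ b)`. -/
structure IsPComod (ρ : R →ₗ[k] Multiplier k (R ⊗[k] A)) (E : Multiplier k (R ⊗[k] A))
    (rmap : R →ₗ[k] A →ₗ[k] R ⊗[k] A) (lmap : A →ₗ[k] R →ₗ[k] R ⊗[k] A) : Prop where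
  ρ_mul : ∀ x y : R, ρ (x * y) = ρ x * ρ y
  ρ_inj : Function.Injective ρ
  E_idem : E * E = E
  hrmap : ∀ (x : R) (a : A), ρ x * oneT k R A a = Multiplier.incl (rmap x a)
  hlmap : ∀ (a : A) (x : R), oneT k R A a * ρ x = Multiplier.incl (lmap a x)
  c1l : ∀ a : A, ∃ l : List (Multiplier k R × A),
      oneT k R A a * E = (l.map fun p => mtensor k R A p.1 p.2).sum
  c1r : ∀ a : A, ∃ l : List (Multiplier k R × A),
      E * oneT k R A a = (l.map fun p => mtensor k R A p.1 p.2).sum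
  c2l : ∀ (x : R) (a : A), ∃ u : R ⊗[k] A, rmap x a = E.U u
  c2r : ∀ (a : A) (x : R), ∃ u : R ⊗[k] A, lmap a x = E.V u
  c3 : ∀ (x : R) (a b : A) (l : List (A × A)), psum k l = H.T1.symm (a ⊗ₜ b) →
      rTensor A (rmap.flip a) (rmap x b)
        = (l.map fun p => (rTensor A E.U) ((TensorProduct.assoc k R A A).symm
            ((lTensor R (H.T1.toLinearMap ∘ₗ (TensorProduct.mk k A A).flip p.2))
              (rmap x p.1)))).sum

/-- A *symmetric* partial `A`-comodule algebra (Definition 3.5 (iv)):  additionally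
`(ρ ⊗ ι)(ρ(x)) = (ι ⊗ Δ)(ρ(x))(E ⊗ 1)`, in the fully covered form
`x⁽⁰⁾⁽⁰⁾ ⊗ ax⁽⁰⁾⁽¹⁾ ⊗ bx⁽¹⁾ = Σᵢ (x⁽⁰⁾ ⊗ (aᵢx⁽¹⁾)₍₁₎)E ⊗ bᵢ(aᵢx⁽¹⁾)₍₂₎` for any
representation `Σᵢ aᵢ ⊗ bᵢ = T4⁻¹(a ⊗ b)`. -/
structure IsSymPComod (ρ : R →ₗ[k] Multiplier k (R ⊗[k] A)) (E : Multiplier k (R ⊗[k] A))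
    (rmap : R →ₗ[k] A →ₗ[k] R ⊗[k] A) (lmap : A →ₗ[k] R →ₗ[k] R ⊗[k] A)
    extends IsPComod H R ρ E rmap lmap : Prop where
  c4 : ∀ (x : R) (a b : A) (l : List (A × A)), psum k l = H.T4.symm (a ⊗ₜ b) →
      rTensor A (lmap a) (lmap b x)
        = (l.map fun p => (rTensor A E.V) ((TensorProduct.assoc k R A A).symm
            ((lTensor R (H.T4.toLinearMap ∘ₗ (TensorProduct.mk k A A).flip p.2))
              (lmap p.1 x)))).sum

/-- `R` is a (global) right `A`-comodule algebra via `ρ` (Definition 3.1), with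
`rmap`/`lmap` recording `ρ(x)(1 ⊗ a) ∈ R ⊗ A` and `(1 ⊗ a)ρ(x) ∈ R ⊗ A`;
coassociativity `(ρ ⊗ ι)ρ = (ι ⊗ Δ)ρ` is stated in its fully covered form. -/
structure IsComod (ρ : R →ₗ[k] Multiplier k (R ⊗[k] A))
    (rmap : R →ₗ[k] A →ₗ[k] R ⊗[k] A) (lmap : A →ₗ[k] R →ₗ[k] R ⊗[k] A) : Prop where
  ρ_mul : ∀ x y : R, ρ (x * y) = ρ x * ρ y
  ρ_inj : Function.Injective ρ
  hrmap : ∀ (x : R) (a : A), ρ x * oneT k R A a = Multiplier.incl (rmap x a)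
  hlmap : ∀ (a : A) (x : R), oneT k R A a * ρ x = Multiplier.incl (lmap a x)
  coassoc : ∀ (x : R) (a b : A) (l : List (A × A)), psum k l = H.T1.symm (a ⊗ₜ b) →
      rTensor A (rmap.flip a) (rmap x b)
        = (l.map fun p => (TensorProduct.assoc k R A A).symm
            ((lTensor R (H.T1.toLinearMap ∘ₗ (TensorProduct.mk k A A).flip p.2))
              (rmap x p.1))).sum

end PComod
section PMod

variable {k}
variable {A : Type*} [NonUnitalRing A] [Module k A] [SMulCommClass k A A] [IsScalarTower k A A]
variable (H : MHA k A)
variable (R : Type*) [NonUnitalRing R] [Module k R] [SMulCommClass k R R] [IsScalarTower k R R]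

/-- `(R, ⬝, 𝔢)` is a *partial `A`-module algebra* (Definition 4.5).  Sweedler
expressions are stated for arbitrary list representations of the corresponding
covered elements; e.g. condition (i) reads
`a ⬝ (x (b ⬝ y)) = Σᵢ (pᵢ ⬝ x)(qᵢ ⬝ y)` whenever `Σᵢ pᵢ ⊗ qᵢ = Δ(a)(1 ⊗ b) = T1(a ⊗ b)`,
and in (ii) one uses the covering `a₍₁₎ ⊗ S(a₍₂₎)b = (ι ⊗ S)((1 ⊗ S⁻¹(b))Δ(a))`. -/
structure IsPModAlg (act : A →ₗ[k] R →ₗ[k] R) (e : A →ₗ[k] Multiplier k R) : Prop where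
  cond1 : ∀ (a b : A) (x y : R) (l : List (A × A)), psum k l = H.T1 (a ⊗ₜ b) →
      act a (x * act b y) = (l.map fun p => act p.1 x * act p.2 y).sum
  cond2a : ∀ (a b : A) (x : R) (l : List (A × A)), psum k l = H.T4 (a ⊗ₜ H.S.symm b) →
      (e a).U (act b x) = (l.map fun p => act p.1 (act (H.S p.2) x)).sum
  cond2b : ∀ (a : A) (x : R),
      (e a).U x ∈ Submodule.span k {z : R | ∃ (b : A) (y : R), z = act b y}
  cond3 : ∀ (la : List A) (lx : List R), ∃ b : A,
      (∀ a ∈ la, a * b = a ∧ b * a = a) ∧ ∀ a ∈ la, ∀ x ∈ lx, act a x = act a (act b x)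
  cond4 : ∀ x : R, (∀ a : A, act a x = 0) → x = 0

/-- A *symmetric* partial `A`-module algebra (Definition 4.5 (v)-(vii)).  In (vi),
one uses the covering `a₍₂₎ ⊗ S⁻¹(a₍₁₎)b = σ((S⁻¹ ⊗ ι)((S(b) ⊗ 1)Δ(a)))`. -/
structure IsSymPModAlg (act : A →ₗ[k] R →ₗ[k] R) (e : A →ₗ[k] Multiplier k R)
    extends IsPModAlg H R act e : Prop where
  cond5 : ∀ (a b : A) (x y : R) (l : List (A × A)), psum k l = H.T3 (a ⊗ₜ b) →
      act a (act b x * y) = (l.map fun p => act p.1 x * act p.2 y).sum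
  cond6 : ∀ (a b : A) (x : R) (l : List (A × A)), psum k l = H.T2 (H.S b ⊗ₜ a) →
      (e a).V (act b x) = (l.map fun p => act p.2 (act (H.S.symm p.1) x)).sum
  cond7 : ∀ (a : A) (x : R),
      (e a).V x ∈ Submodule.span k {z : R | ∃ (b : A) (y : R), z = act b y}

/-- `R` is a (global, unitary) left `A`-module algebra (Definition 4.1). -/
structure IsModAlg (act : A →ₗ[k] R →ₗ[k] R) : Prop where
  assoc : ∀ (a b : A) (x : R), act a (act b x) = act (a * b) x
  unital : Submodule.span k {z : R | ∃ (a : A) (x : R), z = act a x} = ⊤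
  mul_cond : ∀ (a b : A) (x y : R) (l : List (A × A)), psum k l = H.T1 (a ⊗ₜ b) →
      act a (x * act b y) = (l.map fun p => act p.1 x * act p.2 y).sum

end PMod

section Dual

variable {k}
variable {A : Type*} [NonUnitalRing A] [Module k A] [SMulCommClass k A A] [IsScalarTower k A A]
variable (H : MHA k A)
variable (Ahat : Type*) [NonUnitalRing Ahat] [Module k Ahat] [SMulCommClass k Ahat Ahat]
  [IsScalarTower k Ahat Ahat] (Hh : MHA k Ahat)

/-- A realization of the *dual* `Â = {φ(– a) : a ∈ A}` of a regular multiplier Hopf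
algebra `A` with left integral `φ` (as in (2.1)): a regular multiplier Hopf algebra
`Â` together with the linear bijections `hat : a ↦ φ(– a)` and `hat' : b ↦ φ(b –)`,
the evaluation pairing `ev`, the product rule `(ŵ û)(c) = (w ⊗ u)(Δ c)`, the
coproduct rules (2.5) and (2.6) read through `hat`, and the modular element
`δ ∈ M(A)` of (5.1), `(φ ⊗ ι)Δ(a) = φ(a)δ`. -/
structure DualPair where
  φ : A →ₗ[k] k
  φ_ne : φ ≠ 0
  /-- `(ι ⊗ φ)((b ⊗ 1)Δ(a)) = φ(a) b` : left invariance of the integral. -/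
  φ_int : ∀ a b : A, apT k A A φ (H.T2 (b ⊗ₜ a)) = φ a • b
  /-- `(ι ⊗ φ)(Δ(a)(b ⊗ 1)) = φ(a) b` : left invariance of the integral. -/
  φ_int' : ∀ a b : A, apT k A A φ (H.T3 (a ⊗ₜ b)) = φ a • b
  hat : A ≃ₗ[k] Ahat
  hat' : A ≃ₗ[k] Ahat
  ev : Ahat →ₗ[k] A →ₗ[k] k
  ev_hat : ∀ a x : A, ev (hat a) x = φ (x * a)
  ev_hat' : ∀ b x : A, ev (hat' b) x = φ (b * x)
  /-- the product of `Â`: `(φ(– a) u)(c) = Σ φ(c₍₁₎ a) u(c₍₂₎)`. -/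
  ev_mul : ∀ (a : A) (u : Ahat) (c : A),
      ev (hat a * u) c
        = (TensorProduct.lid k k) ((map φ (ev u)) (H.T3 (c ⊗ₜ a)))
  /-- identity (2.5): `Δ̂(φ(– a))(1 ⊗ φ(– b)) = φ(– S⁻¹(b₍₁₎)a) ⊗ φ(– b₍₂₎)`,
  read through `hat⁻¹ ⊗ hat⁻¹` and covered on the right leg by `c`. -/
  hatT1 : ∀ a b c : A,
      (lTensor A (LinearMap.mulRight k c))
          ((map hat.symm.toLinearMap hat.symm.toLinearMap) (Hh.T1 (hat a ⊗ₜ hat b)))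
        = rTensor A (LinearMap.mulRight k a ∘ₗ H.S.symm.toLinearMap) (H.T1 (b ⊗ₜ c))
  /-- identity (2.6): `(ι ⊗ Ŝ)((1 ⊗ Ŝ⁻¹(φ(– b)))Δ̂(φ(– a))) = φ(– b₍₁₎a) ⊗ φ(– b₍₂₎)`,
  read through `hat⁻¹ ⊗ hat⁻¹` and covered on the right leg by `c`. -/
  hatT2 : ∀ a b c : A,
      (lTensor A (LinearMap.mulRight k c))
          ((map hat.symm.toLinearMap hat.symm.toLinearMap)
            ((lTensor Ahat Hh.S.toLinearMap) (Hh.T4 (hat a ⊗ₜ Hh.S.symm (hat b)))))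
        = rTensor A (LinearMap.mulRight k a) (H.T1 (b ⊗ₜ c))
  /-- the modular element `δ`, with `(φ ⊗ ι)(Δ(a)(1 ⊗ b)) = φ(a) • (δ b)`. -/
  delta : Multiplier k A
  deltaInv : Multiplier k A
  delta_inv : delta * deltaInv = 1 ∧ deltaInv * delta = 1
  hdelta : ∀ a b : A, apF k A φ (H.T1 (a ⊗ₜ b)) = φ a • delta.U b

end Dual
section Statements
variable {k}
variable {A : Type*} [NonUnitalRing A] [Module k A] [SMulCommClass k A A] [IsScalarTower k A A]
variable {R : Type*} [NonUnitalRing R] [Module k R] [SMulCommClass k R R] [IsScalarTower k R R]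

/-!
Since `A` is nondegenerate, so is `A ⊗ A`, and an element of `A ⊗ A` is determined by its
products with all `x ⊗ 1`, or with all `1 ⊗ x`. After such a multiplication the maps `T1`–`T4`
can be traded for one another, and coassociativity together with the antipode and counit laws
give the Sweedler identities `a₍₁₎ ⊗ a₍₂₎S(a₍₃₎)b = a ⊗ b` and `a₍₂₎S⁻¹(a₍₁₎)b ⊗ a₍₃₎ = b ⊗ a`,
that is, `T1⁻¹(a ⊗ b) = (ι ⊗ S)T4(a ⊗ S⁻¹b)` and `T3⁻¹(a ⊗ b) = σ(S⁻¹ ⊗ ι)T2(S a ⊗ b)`.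
Conditions (i) and (v) say that `p ⊗ q ↦ (p ⬝ x)(q ⬝ y)` composed with `T1`, resp. `T3`, is
`p ⊗ q ↦ p ⬝ (x (q ⬝ y))`, resp. `p ⊗ q ↦ p ⬝ ((q ⬝ x) y)`; inverting `T1` and `T3` by these
formulas gives the two identities.
-/

section Nondegeneracy

variable {M N P : Type*} [AddCommGroup M] [Module k M] [AddCommGroup N] [Module k N]
  [AddCommGroup P] [Module k P]

theorem TensorProduct.eq_zero_of_forall_dual_rTensor (w : M ⊗[k] N)
    (h : ∀ g : Module.Dual k M, TensorProduct.lid k N (rTensor N g w) = 0) : w = 0 := by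
  classical
  let bM := Module.Basis.ofVectorSpace k M
  let bN := Module.Basis.ofVectorSpace k N
  have repr_eq : ∀ (u : M ⊗[k] N) i j, (bM.tensorProduct bN).repr u (i, j)
      = bN.repr (TensorProduct.lid k N (rTensor N (bM.coord i) u)) j := by
    intro u i j
    induction u with
    | zero => simp
    | tmul m n => simp [Module.Basis.tensorProduct_repr_tmul_apply, mul_comm]
    | add u v hu hv => simp [hu, hv]
  exact (bM.tensorProduct bN).ext_elem fun ⟨i, j⟩ => by simp [repr_eq, h]

theorem TensorProduct.eq_zero_of_forall_lTensor {ι : Type*} (f : ι → N →ₗ[k] P)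
    (hf : ∀ n, (∀ i, f i n = 0) → n = 0) (w : M ⊗[k] N) (h : ∀ i, lTensor M (f i) w = 0) :
    w = 0 := by
  refine eq_zero_of_forall_dual_rTensor w fun g => hf _ fun i => ?_
  have lid_rTensor_lTensor : ∀ u : M ⊗[k] N,
      f i (TensorProduct.lid k N (rTensor N g u))
        = TensorProduct.lid k P (rTensor P g (lTensor M (f i) u)) := by
    intro u
    induction u with
    | zero => simp
    | tmul m n => simp
    | add u v hu hv => simp [hu, hv]
  rw [lid_rTensor_lTensor, h i, map_zero, map_zero]

theorem TensorProduct.eq_zero_of_forall_rTensor {ι : Type*} (f : ι → N →ₗ[k] P)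
    (hf : ∀ n, (∀ i, f i n = 0) → n = 0) (w : N ⊗[k] M) (h : ∀ i, rTensor M (f i) w = 0) :
    w = 0 := by
  have hcomm := eq_zero_of_forall_lTensor f hf (TensorProduct.comm k N M w) fun i => by
    rw [lTensor_comm, h i, map_zero]
  simpa using hcomm

end Nondegeneracy

theorem Multiplier.incl_injective {B : Type*} [NonUnitalRing B] [Module k B]
    [SMulCommClass k B B] [IsScalarTower k B B] (hB : NondegProd B) :
    Function.Injective (Multiplier.incl (k := k) (A := B)) := by
  intro u v huv
  rw [← sub_eq_zero]
  refine hB.1 _ fun w => ?_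
  have hw : u * w = v * w := congrArg (fun m => Multiplier.U m w) huv
  rw [sub_mul, hw, sub_self]

theorem TensorProduct.mul_tmul (u : R ⊗[k] A) (b : R) (c : A) :
    u * (b ⊗ₜ[k] c) = lTensor R (mulRight k c) (rTensor A (mulRight k b) u) := by
  induction u with
  | zero => simp
  | tmul p q => simp [Algebra.TensorProduct.tmul_mul_tmul]
  | add u v hu hv => simp [add_mul, hu, hv]

theorem TensorProduct.tmul_mul (u : R ⊗[k] A) (b : R) (c : A) :
    (b ⊗ₜ[k] c) * u = lTensor R (mulLeft k c) (rTensor A (mulLeft k b) u) := by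
  induction u with
  | zero => simp
  | tmul p q => simp [Algebra.TensorProduct.tmul_mul_tmul]
  | add u v hu hv => simp [mul_add, hu, hv]

theorem NondegProd.tensorProduct (hR : NondegProd R) (hA : NondegProd A) :
    NondegProd (R ⊗[k] A) := by
  constructor
  · intro u hu
    refine TensorProduct.eq_zero_of_forall_rTensor (mulRight k) hR.1 u fun b => ?_
    refine TensorProduct.eq_zero_of_forall_lTensor (mulRight k) hA.1 _ fun c => ?_
    rw [← TensorProduct.mul_tmul, hu]
  · intro u hu
    refine TensorProduct.eq_zero_of_forall_rTensor (mulLeft k) hR.2 u fun b => ?_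
    refine TensorProduct.eq_zero_of_forall_lTensor (mulLeft k) hA.2 _ fun c => ?_
    rw [← TensorProduct.tmul_mul, hu]

theorem oneT_mul_incl (c : A) (u : R ⊗[k] A) :
    oneT k R A c * Multiplier.incl u = Multiplier.incl (lTensor R (mulLeft k c) u) :=
  Multiplier.ext (LinearMap.ext fun w => (oneT k R A c).U_mul u w)
    (LinearMap.ext fun w => (oneT k R A c).compat w u)

theorem incl_mul_oneT (u : R ⊗[k] A) (c : A) :
    Multiplier.incl u * oneT k R A c = Multiplier.incl (lTensor R (mulRight k c) u) :=
  Multiplier.ext (LinearMap.ext fun w => ((oneT k R A c).compat u w).symm)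
    (LinearMap.ext fun w => (oneT k R A c).V_mul w u)

theorem tOne_mul_incl (x : R) (u : R ⊗[k] A) :
    tOne k R A x * Multiplier.incl u = Multiplier.incl (rTensor A (mulLeft k x) u) :=
  Multiplier.ext (LinearMap.ext fun w => (tOne k R A x).U_mul u w)
    (LinearMap.ext fun w => (tOne k R A x).compat w u)

theorem incl_mul_tOne (u : R ⊗[k] A) (x : R) :
    Multiplier.incl u * tOne k R A x = Multiplier.incl (rTensor A (mulRight k x) u) :=
  Multiplier.ext (LinearMap.ext fun w => ((tOne k R A x).compat u w).symm)
    (LinearMap.ext fun w => (tOne k R A x).V_mul w u)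

theorem LinearMap.rTensor_lTensor_comm {M N P Q : Type*} [AddCommGroup M] [Module k M]
    [AddCommGroup N] [Module k N] [AddCommGroup P] [Module k P] [AddCommGroup Q] [Module k Q]
    (f : M →ₗ[k] P) (g : N →ₗ[k] Q) (w : M ⊗[k] N) :
    rTensor Q f (lTensor M g w) = lTensor P g (rTensor N f w) := by
  rw [← comp_apply, rTensor_comp_lTensor, ← lTensor_comp_rTensor, comp_apply]

theorem tOne_mul_oneT_comm (x : R) (c : A) :
    tOne k R A x * oneT k R A c = oneT k R A c * tOne k R A x :=
  Multiplier.ext (LinearMap.ext fun w => LinearMap.rTensor_lTensor_comm _ _ w)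
    (LinearMap.ext fun w => (LinearMap.rTensor_lTensor_comm _ _ w).symm)

theorem TensorProduct.assoc_lTensor {M N P Q : Type*} [AddCommGroup M] [Module k M]
    [AddCommGroup N] [Module k N] [AddCommGroup P] [Module k P] [AddCommGroup Q] [Module k Q]
    (f : P →ₗ[k] Q) (w : (M ⊗[k] N) ⊗[k] P) :
    TensorProduct.assoc k M N Q (lTensor (M ⊗[k] N) f w)
      = lTensor M (lTensor N f) (TensorProduct.assoc k M N P w) := by
  rw [lTensor_tensor]
  simp

theorem lTensor_smulRight (f : A →ₗ[k] k) (z : A) (v : R ⊗[k] A) :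
    lTensor R (f.smulRight z) v = apT k R A f v ⊗ₜ z := by
  induction v with
  | zero => simp
  | tmul m q => simp [TensorProduct.smul_tmul]
  | add u v hu hv => simp [hu, hv, TensorProduct.add_tmul]

theorem rTensor_smulRight (f : A →ₗ[k] k) (z : A) (v : A ⊗[k] A) :
    rTensor A (f.smulRight z) v = z ⊗ₜ apF k A f v := by
  induction v with
  | zero => simp
  | tmul p q => simp [TensorProduct.tmul_smul, TensorProduct.smul_tmul']
  | add u v hu hv => simp [hu, hv, TensorProduct.tmul_add]

namespace MHA

variable (H : MHA k A)

/- Each of the following identities evaluates a product such as `(x ⊗ 1)Δ(p)(1 ⊗ y)` in two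
ways, by associativity in `M(A ⊗ A)`. -/

theorem rTensor_mulLeft_T1 (x p y : A) :
    rTensor A (mulLeft k x) (H.T1 (p ⊗ₜ y)) = lTensor A (mulRight k y) (H.T2 (x ⊗ₜ p)) := by
  apply Multiplier.incl_injective (k := k) (H.nondeg.tensorProduct H.nondeg)
  rw [← tOne_mul_incl, ← incl_mul_oneT, ← H.hT1, ← H.hT2, mul_assoc]

theorem lTensor_mulRight_T4 (a c d : A) :
    lTensor A (mulRight k d) (H.T4 (a ⊗ₜ c)) = lTensor A (mulLeft k c) (H.T1 (a ⊗ₜ d)) := by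
  apply Multiplier.incl_injective (k := k) (H.nondeg.tensorProduct H.nondeg)
  rw [← incl_mul_oneT, ← oneT_mul_incl, ← H.hT1, ← H.hT4, mul_assoc]

theorem lTensor_mulLeft_T3 (x r s : A) :
    lTensor A (mulLeft k x) (H.T3 (r ⊗ₜ s)) = rTensor A (mulRight k s) (H.T4 (r ⊗ₜ x)) := by
  apply Multiplier.incl_injective (k := k) (H.nondeg.tensorProduct H.nondeg)
  rw [← oneT_mul_incl, ← incl_mul_tOne, ← H.hT3, ← H.hT4, mul_assoc]

theorem rTensor_mulLeft_T4 (x y c : A) :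
    rTensor A (mulLeft k x) (H.T4 (y ⊗ₜ c)) = lTensor A (mulLeft k c) (H.T2 (x ⊗ₜ y)) := by
  apply Multiplier.incl_injective (k := k) (H.nondeg.tensorProduct H.nondeg)
  rw [← tOne_mul_incl, ← oneT_mul_incl, ← H.hT4, ← H.hT2, ← mul_assoc, ← mul_assoc,
    tOne_mul_oneT_comm]

theorem S_symm_mul (m n : A) : H.S.symm (m * n) = H.S.symm n * H.S.symm m :=
  H.S.injective (by rw [H.S_antimul]; simp)

theorem apF_counit_T4 (a c : A) : apF k A H.counit (H.T4 (a ⊗ₜ c)) = c * a := by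
  rw [← sub_eq_zero]
  refine H.nondeg.1 _ fun d => ?_
  have apF_mul : ∀ u : A ⊗[k] A,
      apF k A H.counit u * d = apF k A H.counit (lTensor A (mulRight k d) u) := by
    intro u
    induction u with
    | zero => simp
    | tmul p q => simp [smul_mul_assoc]
    | add u v hu hv => simp [add_mul, hu, hv]
  have mul_apF : ∀ u : A ⊗[k] A,
      apF k A H.counit (lTensor A (mulLeft k c) u) = c * apF k A H.counit u := by
    intro u
    induction u with
    | zero => simp
    | tmul p q => simp [mul_smul_comm]
    | add u v hu hv => simp [mul_add, hu, hv]
  rw [sub_mul, apF_mul, H.lTensor_mulRight_T4, mul_apF, H.hcounit1, mul_assoc, sub_self]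

theorem mul'_lTensor_S_T4 (y c : A) :
    mul' k A (lTensor A H.S.toLinearMap (H.T4 (y ⊗ₜ c))) = H.counit y • H.S c := by
  rw [← sub_eq_zero]
  refine H.nondeg.2 _ fun x => ?_
  have mul_mul'_S : ∀ u : A ⊗[k] A,
      x * mul' k A (lTensor A H.S.toLinearMap u)
        = mul' k A (lTensor A H.S.toLinearMap (rTensor A (mulLeft k x) u)) := by
    intro u
    induction u with
    | zero => simp
    | tmul p q => simp [mul_assoc]
    | add u v hu hv => simp [mul_add, hu, hv]
  have mul'_S_mulLeft : ∀ u : A ⊗[k] A,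
      mul' k A (lTensor A H.S.toLinearMap (lTensor A (mulLeft k c) u))
        = mul' k A (lTensor A H.S.toLinearMap u) * H.S c := by
    intro u
    induction u with
    | zero => simp
    | tmul p q => simp [H.S_antimul, mul_assoc]
    | add u v hu hv => simp [add_mul, hu, hv]
  rw [mul_sub, mul_mul'_S, H.rTensor_mulLeft_T4, mul'_S_mulLeft, H.hS2, smul_mul_assoc,
    mul_smul_comm, sub_self]

theorem mul'_comm_rTensor_S_symm_T2 (a b : A) :
    mul' k A (TensorProduct.comm k A A (rTensor A H.S.symm.toLinearMap (H.T2 (a ⊗ₜ b))))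
      = H.counit b • H.S.symm a := by
  have S_symm_mul' : ∀ u : A ⊗[k] A,
      mul' k A (TensorProduct.comm k A A (rTensor A H.S.symm.toLinearMap u))
        = H.S.symm (mul' k A (lTensor A H.S.toLinearMap u)) := by
    intro u
    induction u with
    | zero => simp
    | tmul p q => simp [H.S_symm_mul]
    | add u v hu hv => simp [hu, hv]
  rw [S_symm_mul', H.hS2, map_smul]

/-- Both sides are `(x ⊗ 1 ⊗ c)(Δ ⊗ ι)Δ(a)`; `MHA.coassoc` is the analogous identity for
`(a ⊗ 1 ⊗ 1)(Δ ⊗ ι)Δ(b)(1 ⊗ 1 ⊗ c)`. -/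
theorem coassoc_T2_T4 (x a c : A) :
    TensorProduct.assoc k A A A (rTensor A (H.T2.toLinearMap ∘ₗ TensorProduct.mk k A A x)
        (H.T4 (a ⊗ₜ c)))
      = lTensor A (H.T4.toLinearMap ∘ₗ (TensorProduct.mk k A A).flip c) (H.T2 (x ⊗ₜ a)) := by
  have T4_mulRight : ∀ d : A, lTensor A (mulRight k d) ∘ₗ
        (H.T4.toLinearMap ∘ₗ (TensorProduct.mk k A A).flip c)
      = lTensor A (mulLeft k c) ∘ₗ (H.T1.toLinearMap ∘ₗ (TensorProduct.mk k A A).flip d) :=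
    fun d => LinearMap.ext fun y => H.lTensor_mulRight_T4 y c d
  have sep : ∀ w : A ⊗[k] A, (∀ d : A, lTensor A (mulRight k d) w = 0) → w = 0 := by
    intro w hw
    refine TensorProduct.eq_zero_of_forall_lTensor (mulRight k) H.nondeg.1 w ?_
    exact hw
  rw [← sub_eq_zero]
  refine TensorProduct.eq_zero_of_forall_lTensor (fun d => lTensor A (mulRight k d)) sep _
    fun d => ?_
  rw [map_sub, sub_eq_zero, ← TensorProduct.assoc_lTensor, ← LinearMap.rTensor_lTensor_comm,
    H.lTensor_mulRight_T4, LinearMap.rTensor_lTensor_comm, TensorProduct.assoc_lTensor,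
    H.coassoc, ← lTensor_comp_apply, ← lTensor_comp_apply, T4_mulRight]

theorem T1_lTensor_S_T4 (a c : A) :
    H.T1 (lTensor A H.S.toLinearMap (H.T4 (a ⊗ₜ c))) = a ⊗ₜ H.S c := by
  rw [← sub_eq_zero]
  refine TensorProduct.eq_zero_of_forall_rTensor (mulLeft k) H.nondeg.2 _ fun x => ?_
  rw [map_sub, sub_eq_zero]
  have leg23 : ∀ (v : A ⊗[k] A) (r : A), lTensor A (mul' k A ∘ₗ lTensor A H.S.toLinearMap)
      (TensorProduct.assoc k A A A (v ⊗ₜ r)) = lTensor A (mulRight k (H.S r)) v := by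
    intro v r
    induction v with
    | zero => simp
    | tmul p q => simp
    | add u v hu hv => simp [TensorProduct.add_tmul, hu, hv]
  have mulLeft_T1 : ∀ u : A ⊗[k] A,
      rTensor A (mulLeft k x) (H.T1 (lTensor A H.S.toLinearMap u))
        = lTensor A (mul' k A ∘ₗ lTensor A H.S.toLinearMap) (TensorProduct.assoc k A A A
            (rTensor A (H.T2.toLinearMap ∘ₗ TensorProduct.mk k A A x) u)) := by
    intro u
    induction u with
    | zero => simp
    | tmul p r => simp [H.rTensor_mulLeft_T1, leg23]
    | add u v hu hv => simp [hu, hv]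
  have counit_S : (mul' k A ∘ₗ lTensor A H.S.toLinearMap) ∘ₗ
      (H.T4.toLinearMap ∘ₗ (TensorProduct.mk k A A).flip c) = H.counit.smulRight (H.S c) :=
    LinearMap.ext fun y => H.mul'_lTensor_S_T4 y c
  rw [mulLeft_T1, coassoc_T2_T4, ← lTensor_comp_apply, counit_S, lTensor_smulRight,
    H.hcounit2]
  simp

theorem T3_comm_rTensor_S_symm_T2 (c a : A) :
    H.T3 (TensorProduct.comm k A A (rTensor A H.S.symm.toLinearMap (H.T2 (c ⊗ₜ a))))
      = H.S.symm c ⊗ₜ a := by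
  rw [← sub_eq_zero]
  refine TensorProduct.eq_zero_of_forall_lTensor (mulLeft k) H.nondeg.2 _ fun x => ?_
  rw [map_sub, sub_eq_zero]
  have leg13 : ∀ (p : A) (v : A ⊗[k] A),
      rTensor A (mul' k A ∘ₗ (TensorProduct.comm k A A).toLinearMap ∘ₗ
          rTensor A H.S.symm.toLinearMap) ((TensorProduct.assoc k A A A).symm (p ⊗ₜ v))
        = rTensor A (mulRight k (H.S.symm p)) v := by
    intro p v
    induction v with
    | zero => simp
    | tmul q r => simp
    | add u v hu hv => simp [TensorProduct.tmul_add, hu, hv]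
  have mulLeft_T3 : ∀ u : A ⊗[k] A,
      lTensor A (mulLeft k x) (H.T3 (TensorProduct.comm k A A
          (rTensor A H.S.symm.toLinearMap u)))
        = rTensor A (mul' k A ∘ₗ (TensorProduct.comm k A A).toLinearMap ∘ₗ
            rTensor A H.S.symm.toLinearMap) ((TensorProduct.assoc k A A A).symm
              (lTensor A (H.T4.toLinearMap ∘ₗ (TensorProduct.mk k A A).flip x) u)) := by
    intro u
    induction u with
    | zero => simp
    | tmul p q => simp [H.lTensor_mulLeft_T3, leg13]
    | add u v hu hv => simp [hu, hv]
  have counit_S_symm : (mul' k A ∘ₗ (TensorProduct.comm k A A).toLinearMap ∘ₗ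
      rTensor A H.S.symm.toLinearMap) ∘ₗ (H.T2.toLinearMap ∘ₗ TensorProduct.mk k A A c)
        = H.counit.smulRight (H.S.symm c) :=
    LinearMap.ext fun y => H.mul'_comm_rTensor_S_symm_T2 c y
  rw [mulLeft_T3, ← coassoc_T2_T4, LinearEquiv.symm_apply_apply, ← rTensor_comp_apply,
    counit_S_symm, rTensor_smulRight, H.apF_counit_T4]
  simp

end MHA

section ModuleAlgebra

theorem exists_psum_eq {M N : Type*} [AddCommGroup M] [Module k M] [AddCommGroup N] [Module k N]
    (u : M ⊗[k] N) : ∃ l : List (M × N), psum k l = u := by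
  induction u with
  | zero => exact ⟨[], rfl⟩
  | tmul m n => exact ⟨[(m, n)], by simp [psum]⟩
  | add u v hu hv =>
    obtain ⟨l₁, rfl⟩ := hu
    obtain ⟨l₂, rfl⟩ := hv
    exact ⟨l₁ ++ l₂, by simp [psum]⟩

theorem map_psum {M N P : Type*} [AddCommGroup M] [Module k M] [AddCommGroup N] [Module k N]
    [AddCommGroup P] [Module k P] (F : M ⊗[k] N →ₗ[k] P) (l : List (M × N)) :
    F (psum k l) = (l.map fun p => F (p.1 ⊗ₜ p.2)).sum := by
  induction l with
  | nil => simp [psum]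
  | cons p l ih => simp [psum, ← ih]

def actMul (act : A →ₗ[k] R →ₗ[k] R) (x y : R) : A ⊗[k] A →ₗ[k] R :=
  mul' k R ∘ₗ TensorProduct.map (act.flip x) (act.flip y)

@[simp] theorem actMul_tmul (act : A →ₗ[k] R →ₗ[k] R) (x y : R) (p q : A) :
    actMul act x y (p ⊗ₜ q) = act p x * act q y := rfl

variable {H : MHA k A} {act : A →ₗ[k] R →ₗ[k] R} {e : A →ₗ[k] Multiplier k R}

namespace IsPModAlg

theorem act_mul_act_eq_actMul_T1 (h : IsPModAlg H R act e) (p q : A) (x y : R) :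
    act p (x * act q y) = actMul act x y (H.T1 (p ⊗ₜ q)) := by
  obtain ⟨l, hl⟩ := exists_psum_eq (H.T1 (p ⊗ₜ q))
  rw [h.cond1 p q x y l hl, ← hl, map_psum]
  rfl

theorem act_mul_act_eq_sum_T4 (h : IsPModAlg H R act e) (a b : A) (x y : R)
    (l : List (A × A)) (hl : psum k l = H.T4 (a ⊗ₜ H.S.symm b)) :
    act a x * act b y = (l.map fun p => act p.1 (x * act (H.S p.2) y)).sum := by
  calc act a x * act b y = actMul act x y (a ⊗ₜ H.S (H.S.symm b)) := by simp
    _ = (actMul act x y ∘ₗ H.T1.toLinearMap ∘ₗ lTensor A H.S.toLinearMap) (psum k l) := by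
      rw [hl, ← H.T1_lTensor_S_T4]
      rfl
    _ = _ := by simp [map_psum, h.act_mul_act_eq_actMul_T1]

end IsPModAlg

namespace IsSymPModAlg

theorem act_act_mul_eq_actMul_T3 (h : IsSymPModAlg H R act e) (p q : A) (x y : R) :
    act p (act q x * y) = actMul act x y (H.T3 (p ⊗ₜ q)) := by
  obtain ⟨l, hl⟩ := exists_psum_eq (H.T3 (p ⊗ₜ q))
  rw [h.cond5 p q x y l hl, ← hl, map_psum]
  rfl

theorem act_mul_act_eq_sum_T2 (h : IsSymPModAlg H R act e) (a b : A) (x y : R)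
    (l : List (A × A)) (hl : psum k l = H.T2 (H.S a ⊗ₜ b)) :
    act a x * act b y = (l.map fun p => act p.2 (act (H.S.symm p.1) x * y)).sum := by
  calc act a x * act b y = actMul act x y (H.S.symm (H.S a) ⊗ₜ b) := by simp
    _ = (actMul act x y ∘ₗ H.T3.toLinearMap ∘ₗ (TensorProduct.comm k A A).toLinearMap ∘ₗ
          rTensor A H.S.symm.toLinearMap) (psum k l) := by
      rw [hl, ← H.T3_comm_rTensor_S_symm_T2]
      rfl
    _ = _ := by simp [map_psum, h.act_act_mul_eq_actMul_T3]

end IsSymPModAlg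

end ModuleAlgebra

theorem sym_partial_action_mul_identities_general
    (H : MHA k A)
    (act : A →ₗ[k] R →ₗ[k] R) (e : A →ₗ[k] Multiplier k R)
    (h : IsSymPModAlg H R act e) :
    (∀ (a b : A) (x y : R) (l : List (A × A)), psum k l = H.T4 (a ⊗ₜ H.S.symm b) →
        act a x * act b y = (l.map fun p => act p.1 (x * act (H.S p.2) y)).sum)
    ∧ (∀ (a b : A) (x y : R) (l : List (A × A)), psum k l = H.T2 (H.S a ⊗ₜ b) →
        act a x * act b y
          = (l.map fun p => act p.2 (act (H.S.symm p.1) x * y)).sum) :=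
  ⟨h.toIsPModAlg.act_mul_act_eq_sum_T4, h.act_mul_act_eq_sum_T2⟩

/-- **Lemma 4.11.**  Let `(R, ·, 𝔢)` be a symmetric partial `A`-module algebra over a
regular multiplier Hopf algebra `A`.  Then for all `a, b ∈ A`, `x, y ∈ R`:
(i) `(a·x)(b·y) = a₍₁₎·(x(S(a₍₂₎)b·y))`, where `a₍₁₎ ⊗ S(a₍₂₎)b` is covered as
`(ι ⊗ S)((1 ⊗ S⁻¹(b))Δ(a)) = (ι ⊗ S)(T4(a ⊗ S⁻¹(b)))`;
(ii) `(a·x)(b·y) = b₍₂₎·((S⁻¹(b₍₁₎)a·x)y)`, where `b₍₂₎ ⊗ S⁻¹(b₍₁₎)a` is covered via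
`(S(a) ⊗ 1)Δ(b) = T2(S(a) ⊗ b)`. -/
theorem sym_partial_action_mul_identities
    (H : MHA k A) (hR : NondegProd R)
    (act : A →ₗ[k] R →ₗ[k] R) (e : A →ₗ[k] Multiplier k R)
    (h : IsSymPModAlg H R act e) :
    (∀ (a b : A) (x y : R) (l : List (A × A)), psum k l = H.T4 (a ⊗ₜ H.S.symm b) →
        act a x * act b y = (l.map fun p => act p.1 (x * act (H.S p.2) y)).sum)
    ∧ (∀ (a b : A) (x y : R) (l : List (A × A)), psum k l = H.T2 (H.S a ⊗ₜ b) →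
        act a x * act b y
          = (l.map fun p => act p.2 (act (H.S.symm p.1) x * y)).sum) :=
  sym_partial_action_mul_identities_general H act e h

end Statements
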